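/- Let z_1,...,z_m be pairwise distinct complex numbers and w a complex number distinct from all z_j. Then ∑_{j=1}^m [∏_{k≠j} (z - z_k)] / [(w - z_j) · ∏_{k≠j} (z_j - z_k)] = ∑_{j=1}^m [∏_{k=1}^{j-1} (z - z_k)] / [∏_{k=1}^{j} (w - z_k)] for every complex z. -/

import Mathlib

/-!
Both sides are polynomials of degree `< m` in `z`. The left side is the Lagrange interpolant of
`x ↦ (w - x)⁻¹` at the nodes `z_1, …, z_m`, while the right side is a Newton-form polynomial which
takes the same values at the nodes: multiplied by `w - x` its partial sums telescope to
`1 - ∏_{k ≤ n} (x - z_k) / (w - z_k)`, and the product vanishes at every node. Uniqueness of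
interpolation finishes the proof.
-/

open Finset Polynomial Lagrange

theorem Lagrange.eval_interpolate {F ι : Type*} [Field F] [DecidableEq ι] (s : Finset ι)
    (v r : ι → F) (x : F) :
    (interpolate s v r).eval x =
      ∑ i ∈ s, r i * (∏ j ∈ s.erase i, (x - v j)) / ∏ j ∈ s.erase i, (v i - v j) := by
  simp only [interpolate_apply, eval_finsetSum, eval_mul, eval_C, Lagrange.basis, eval_prod,
    basisDivisor, eval_sub, eval_X, prod_mul_distrib, prod_inv_distrib]
  exact sum_congr rfl fun i _ => by ring

section Newton

variable {F : Type*} [Field F] {w : F} {zs : ℕ → F}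

theorem sub_mul_sum_div_prod_sub (n : ℕ) (hw : ∀ k ∈ Icc 1 n, w ≠ zs k) (x : F) :
    (w - x) * ∑ j ∈ Icc 1 n, (∏ k ∈ Icc 1 (j - 1), (x - zs k)) / ∏ k ∈ Icc 1 j, (w - zs k) =
      1 - (∏ k ∈ Icc 1 n, (x - zs k)) / ∏ k ∈ Icc 1 n, (w - zs k) := by
  induction n with
  | zero => simp
  | succ n ih =>
    have hw' : ∀ k ∈ Icc 1 n, w ≠ zs k := fun k hk => hw k (Icc_subset_Icc_right n.le_succ hk)
    have hQ : ∏ k ∈ Icc 1 n, (w - zs k) ≠ 0 :=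
      prod_ne_zero_iff.2 fun k hk => sub_ne_zero.2 (hw' k hk)
    have hn : w - zs (n + 1) ≠ 0 := sub_ne_zero.2 (hw _ (by simp))
    rw [sum_Icc_succ_top (by omega), mul_add, ih hw', prod_Icc_succ_top (by omega),
      prod_Icc_succ_top (by omega), Nat.add_sub_cancel]
    field_simp
    ring

variable (w zs)

/-- The Newton form of the interpolant of `x ↦ (w - x)⁻¹` at `zs 1, …, zs n`: its `j`-th divided
difference is `1 / ∏_{k ≤ j} (w - zs k)`. -/
noncomputable def newtonInvSub (n : ℕ) : F[X] :=
  ∑ j ∈ Icc 1 n, (∏ k ∈ Icc 1 j, (w - zs k))⁻¹ • nodal (Icc 1 (j - 1)) zs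

theorem eval_newtonInvSub (n : ℕ) (x : F) :
    (newtonInvSub w zs n).eval x =
      ∑ j ∈ Icc 1 n, (∏ k ∈ Icc 1 (j - 1), (x - zs k)) / ∏ k ∈ Icc 1 j, (w - zs k) := by
  simp only [newtonInvSub, eval_finsetSum, eval_smul, eval_nodal, smul_eq_mul, div_eq_inv_mul]

theorem degree_newtonInvSub_lt (n : ℕ) : (newtonInvSub w zs n).degree < n := by
  refine (degree_sum_le _ _).trans_lt ((Finset.sup_lt_iff (WithBot.bot_lt_coe n)).2 fun j hj => ?_)
  calc (_ • nodal (Icc 1 (j - 1)) zs).degree ≤ (nodal (Icc 1 (j - 1)) zs).degree :=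
        degree_smul_le _ _
    _ = (j - 1 : ℕ) := by rw [degree_nodal, Nat.card_Icc, Nat.add_sub_cancel]
    _ < n := by have := mem_Icc.1 hj; exact_mod_cast (by omega : j - 1 < n)

variable {w zs}

theorem eval_newtonInvSub_at_node {n i : ℕ} (hw : ∀ k ∈ Icc 1 n, w ≠ zs k) (hi : i ∈ Icc 1 n) :
    (newtonInvSub w zs n).eval (zs i) = (w - zs i)⁻¹ := by
  have := sub_mul_sum_div_prod_sub n hw (zs i)
  rw [prod_eq_zero hi (sub_self _), zero_div, sub_zero] at this
  rw [eval_newtonInvSub]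
  exact eq_inv_of_mul_eq_one_right this

end Newton

/-- For pairwise distinct `z_1,...,z_m` and `w` distinct from all `z_j`:
`∑_j ∏_{k≠j}(z - z_k) / [(w - z_j) ∏_{k≠j}(z_j - z_k)]
  = ∑_j ∏_{k=1}^{j-1}(z - z_k) / ∏_{k=1}^{j}(w - z_k)` for every `z`. -/
theorem partial_fraction_sum_eq (m : ℕ) (zs : ℕ → ℂ)
    (hzs : Set.InjOn zs (Finset.Icc 1 m : Set ℕ)) (w : ℂ)
    (hw : ∀ j ∈ Finset.Icc 1 m, w ≠ zs j) (z : ℂ) :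
    ∑ j ∈ Finset.Icc 1 m,
      (∏ k ∈ (Finset.Icc 1 m).erase j, (z - zs k)) /
        ((w - zs j) * ∏ k ∈ (Finset.Icc 1 m).erase j, (zs j - zs k)) =
    ∑ j ∈ Finset.Icc 1 m,
      (∏ k ∈ Finset.Icc 1 (j - 1), (z - zs k)) /
        ∏ k ∈ Finset.Icc 1 j, (w - zs k) := by
  have hdeg : (newtonInvSub w zs m).degree < #(Icc 1 m) := by
    simpa using degree_newtonInvSub_lt w zs m
  have hnewton := eq_interpolate_of_eval_eq (r := fun j => (w - zs j)⁻¹) hzs hdeg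
    fun i hi => eval_newtonInvSub_at_node hw hi
  rw [← eval_newtonInvSub, hnewton, eval_interpolate]
  exact sum_congr rfl fun j _ => by simp only [div_eq_mul_inv, mul_inv]; ring
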